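/- For every nonnegative integer k, every nonnegative real number r, and all positive real numbers ℓ and N, there exists a real number N* ≥ (k+1)N such that the following holds. Let (G,φ) be a (0,ℓ]-bounded weighted graph, let S ⊆ V(G) with |S| ≤ k, let Z ⊆ N_{(G,φ)}^{≤r}[S], let m be a positive integer, let R ⊆ V(G), let c_Z : Z → {1,…,m}, and let c be an m-coloring of ((G,φ)−Z)^ℓ − R with weak diameter in (G,φ)^ℓ at most N. Then the m-coloring c ∪ c_Z|_{Z−R} of (G,φ)^ℓ − R has weak diameter in (G,φ)^ℓ at most N*. -/

import Mathlib

open scoped ENNReal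

/-- The length of a walk in an edge-weighted graph: the sum of the weights of its edges. -/
def walkLen {V : Type} {G : SimpleGraph V} (w : Sym2 V → ℝ) {x y : V} (p : G.Walk x y) : ℝ :=
  (p.edges.map w).sum

/-- The distance between two vertices of an edge-weighted graph: the infimum of the lengths
of paths between them (`⊤` if there is no such path). -/
noncomputable def wDist {V : Type} (G : SimpleGraph V) (w : Sym2 V → ℝ) (x y : V) : ℝ≥0∞ :=
  ⨅ q : {q : G.Walk x y // q.IsPath}, ENNReal.ofReal (walkLen w q.1)

lemma wDist_comm {V : Type} (G : SimpleGraph V) (w : Sym2 V → ℝ) (x y : V) :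
    wDist G w x y = wDist G w y x := by
  have key : ∀ a b : V, wDist G w a b ≤ wDist G w b a := by
    intro a b
    refine le_iInf fun q => ?_
    refine iInf_le_of_le ⟨q.1.reverse, q.2.reverse⟩ ?_
    simp [walkLen, List.sum_reverse]
  exact le_antisymm (key x y) (key y x)

/-- The power graph: two distinct vertices are adjacent iff their weighted distance
is at most `r`. -/
noncomputable def powerGraph {V : Type} (G : SimpleGraph V) (w : Sym2 V → ℝ) (r : ℝ) :
    SimpleGraph V where
  Adj x y := x ≠ y ∧ wDist G w x y ≤ ENNReal.ofReal r
  symm := ⟨by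
    rintro x y ⟨hne, hle⟩
    exact ⟨hne.symm, by rwa [wDist_comm]⟩⟩
  loopless := ⟨fun x h => h.1 rfl⟩

/-- The unit-length (hop) distance in an unweighted graph. -/
noncomputable def hopDist {V : Type} (L : SimpleGraph V) (x y : V) : ℝ≥0∞ :=
  ⨅ q : L.Walk x y, (q.length : ℝ≥0∞)

/-- Same-colour adjacency within a vertex set `A`. -/
def colorGraph {V : Type} (K : SimpleGraph V) (A : Set V) {m : ℕ} (c : V → Fin m) :
    SimpleGraph V where
  Adj x y := K.Adj x y ∧ x ∈ A ∧ y ∈ A ∧ c x = c y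
  symm := ⟨by
    rintro x y ⟨h, hx, hy, hc⟩
    exact ⟨h.symm, hy, hx, hc.symm⟩⟩
  loopless := ⟨fun x h => K.loopless.irrefl x h.1⟩

/-- The colouring `c` of the subgraph of `K` induced on `A` has weak diameter, measured by the
hop distance of `L`, at most `N`: any two vertices of a monochromatic component of `K ↾ A` are
at hop distance at most `N` in `L`. -/
def HasWeakDiamLE {V : Type} (K : SimpleGraph V) (A : Set V) (L : SimpleGraph V) {m : ℕ}
    (c : V → Fin m) (N : ℝ) : Prop :=
  ∀ x ∈ A, ∀ y ∈ A, (colorGraph K A c).Reachable x y → hopDist L x y ≤ ENNReal.ofReal N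

/-- `nbhd G w r S`: vertices joined to `S` by a path of weighted length at most `r`. -/
def nbhd {V : Type} (G : SimpleGraph V) (w : Sym2 V → ℝ) (r : ℝ) (S : Set V) : Set V :=
  {v | ∃ s ∈ S, ∃ q : G.Walk v s, q.IsPath ∧ walkLen w q ≤ r}

/-- Deleting a set of vertices (keeping them as isolated vertices of the ambient type). -/
def delVerts {V : Type} (G : SimpleGraph V) (Z : Set V) : SimpleGraph V where
  Adj x y := G.Adj x y ∧ x ∉ Z ∧ y ∉ Z
  symm := ⟨by
    rintro x y ⟨h, hx, hy⟩
    exact ⟨h.symm, hy, hx⟩⟩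
  loopless := ⟨fun x h => G.loopless.irrefl x h.1⟩

/-- A weighted graph: a finite simple graph together with positive edge weights. -/
structure WGraph : Type 1 where
  V : Type
  fin : Finite V
  G : SimpleGraph V
  w : Sym2 V → ℝ
  pos : ∀ e ∈ G.edgeSet, 0 < w e

/-- The extended metric on the vertex set of a weighted graph. -/
noncomputable def WGraph.dist (W : WGraph) : W.V → W.V → ℝ≥0∞ := wDist W.G W.w

/-- All edge weights lie in `(0, ℓ]`. -/
def WGraph.IsBounded (W : WGraph) (ℓ : ℝ) : Prop := ∀ e ∈ W.G.edgeSet, W.w e ≤ ℓ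

/-- `f` is an `n`-dimensional control function for the extended metric `d`. -/
def IsControlOn {X : Type} (d : X → X → ℝ≥0∞) (n : ℕ) (f : ℝ → ℝ) : Prop :=
  ∀ r : ℝ, 0 < r → ∃ U : Fin (n + 1) → Set (Set X),
    (∀ x : X, ∃ i, ∃ s ∈ U i, x ∈ s) ∧
    (∀ i, ∀ s ∈ U i, ∀ t ∈ U i, s ≠ t → ∀ x ∈ s, ∀ y ∈ t, ENNReal.ofReal r < d x y) ∧
    (∀ i, ∀ s ∈ U i, ∀ x ∈ s, ∀ y ∈ s, d x y ≤ ENNReal.ofReal (f r))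

/-- The asymptotic dimension of a class of weighted graphs is at most `n`. -/
def asdimLE (F : Set WGraph) (n : ℕ) : Prop :=
  ∃ f : ℝ → ℝ, (∀ x, 0 < x → 0 < f x) ∧ ∀ W ∈ F, IsControlOn W.dist n f

/-- The Assouad–Nagata dimension of a class of weighted graphs is at most `n`:
some dilation is a common `n`-dimensional control function. -/
def ANdimLE (F : Set WGraph) (n : ℕ) : Prop :=
  ∃ (f : ℝ → ℝ) (c : ℝ), 0 < c ∧ (∀ x, 0 < x → 0 < f x) ∧ (∀ x, 0 < x → f x ≤ c * x) ∧
    ∀ W ∈ F, IsControlOn W.dist n f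

/-- `H` is a minor of `G`: there are pairwise disjoint nonempty connected branch sets in `G`,
one for each vertex of `H`, with branch sets of adjacent vertices joined by an edge. -/
def IsMinorOf {α β : Type} (H : SimpleGraph β) (G : SimpleGraph α) : Prop :=
  ∃ B : β → Set α,
    (∀ h, (B h).Nonempty) ∧
    (∀ h h', h ≠ h' → Disjoint (B h) (B h')) ∧
    (∀ h, (G.induce (B h)).Connected) ∧
    (∀ h h', H.Adj h h' → ∃ a ∈ B h, ∃ b ∈ B h', G.Adj a b)

/-! Call a vertex *near* if it lies within `h = ⌊2r/ℓ + 1⌋₊ + 1` hops of `S` in `(G,φ)^ℓ`: a path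
of weight at most `r` is covered by at most `2r/ℓ + 1` hops, so every vertex of `Z`, and every
vertex at weighted distance at most `ℓ` from `Z`, is near. Hence a monochromatic edge of the
patched colouring either is a `c`-monochromatic edge of `((G,φ) − Z)^ℓ − R` or joins two near
vertices. Along a monochromatic walk from `x` to `y`, let `u` be the last near vertex, near the
centre `s₀`, and `u'` the first vertex near `s₀`. After `u` the walk stays in one
`c`-monochromatic component, so `u` and `y` are at most `N` hops apart; `u'` and `u` are `2h` hops
apart through `s₀`; and the walk before `u'` never comes near `s₀`. Induction on the set of
centres the walk comes near bounds the hop distance from `x` to `y` by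
`⌊N⌋₊ + |S| (⌊N⌋₊ + 2h + 1)`. -/

open SimpleGraph Finset

namespace SimpleGraph

variable {V : Type*} {K K₀ L : SimpleGraph V}

lemma edist_triangle4 (u v w x : V) : L.edist u x ≤ L.edist u v + L.edist v w + L.edist w x :=
  L.edist_triangle.trans (by rw [add_assoc]; gcongr; exact L.edist_triangle)

lemma Walk.exists_suffix_after_last (Q : V → Prop) {x y : V} (p : K.Walk x y)
    (hp : ∃ v ∈ p.support, Q v) :
    ∃ u ∈ p.support, Q u ∧ ∃ q : K.Walk u y, ∀ v ∈ q.support.tail, ¬ Q v := by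
  induction p with
  | nil =>
    obtain ⟨v, hv, hQ⟩ := hp
    rw [Walk.support_nil, List.mem_singleton] at hv
    subst hv
    exact ⟨v, by simp, hQ, Walk.nil, by simp⟩
  | @cons x x' y hxx' p ih =>
    by_cases hp' : ∃ v ∈ p.support, Q v
    · obtain ⟨u, hu, hQu, q, hq⟩ := ih hp'
      exact ⟨u, by simp [hu], hQu, q, hq⟩
    · push Not at hp'
      have hQx : Q x := by
        obtain ⟨v, hv, hQ⟩ := hp
        rcases List.mem_cons.mp (Walk.support_cons hxx' p ▸ hv) with rfl | hv
        · exact hQ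
        · exact absurd hQ (hp' v hv)
      exact ⟨x, by simp, hQx, Walk.cons hxx' p, by simpa using hp'⟩

lemma Walk.exists_prefix_before_first (Q : V → Prop) {x y : V} (p : K.Walk x y)
    (hp : ∃ v ∈ p.support, Q v) :
    Q x ∨ ∃ v u, ∃ t : K.Walk x v, K.Adj v u ∧ Q u ∧ ∀ w ∈ t.support, w ∈ p.support ∧ ¬ Q w := by
  induction p with
  | nil =>
    obtain ⟨v, hv, hQ⟩ := hp
    rw [Walk.support_nil, List.mem_singleton] at hv
    exact .inl (hv ▸ hQ)
  | @cons x x' y hxx' p ih =>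
    by_cases hQx : Q x
    · exact .inl hQx
    right
    have hp' : ∃ v ∈ p.support, Q v := by
      obtain ⟨v, hv, hQ⟩ := hp
      rcases List.mem_cons.mp (Walk.support_cons hxx' p ▸ hv) with rfl | hv
      · exact absurd hQ hQx
      · exact ⟨v, hv, hQ⟩
    rcases ih hp' with hQx' | ⟨v, u, t, hvu, hQu, ht⟩
    · exact ⟨x, x', Walk.nil, hxx', hQx', by simpa using hQx⟩
    · refine ⟨v, u, Walk.cons hxx' t, hvu, hQu, ?_⟩
      intro w hw
      rcases List.mem_cons.mp (Walk.support_cons hxx' t ▸ hw) with rfl | hw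
      · exact ⟨p.support_cons hxx' ▸ List.mem_cons_self, hQx⟩
      · exact ⟨p.support_cons hxx' ▸ List.mem_cons_of_mem _ (ht w hw).1, (ht w hw).2⟩

lemma Walk.reachable_of_forall_mem_tail_not (Q : V → Prop)
    (hK : ∀ u v, K.Adj u v → K₀.Adj u v ∨ Q u ∧ Q v) {x y : V} (p : K.Walk x y)
    (hp : ∀ v ∈ p.support.tail, ¬ Q v) : K₀.Reachable x y := by
  induction p with
  | nil => rfl
  | @cons x x' y hxx' p ih =>
    rw [Walk.support_cons, List.tail_cons] at hp
    have hxx'₀ : K₀.Adj x x' := (hK x x' hxx').resolve_right fun h => hp x' p.start_mem_support h.2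
    exact hxx'₀.reachable.trans (ih fun v hv => hp v (List.mem_of_mem_tail hv))

theorem edist_le_of_walk_of_adj_or_near (hKL : K ≤ L) {S : Set V} {h b : ℕ}
    (hK₀ : ∀ u v, K₀.Reachable u v → L.edist u v ≤ b)
    (hK : ∀ u v, K.Adj u v →
      K₀.Adj u v ∨ (∃ s ∈ S, L.edist u s ≤ h) ∧ ∃ s ∈ S, L.edist v s ≤ h)
    (T : Finset V) {x y : V} (p : K.Walk x y)
    (hT : ∀ v ∈ p.support, ∀ s ∈ S, L.edist v s ≤ h → s ∈ T) :
    L.edist x y ≤ (b + #T * (b + 2 * h + 1) : ℕ) := by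
  classical
  induction T using Finset.strongInduction generalizing x y with
  | H T ih =>
  by_cases hnear : ∃ v ∈ p.support, ∃ s ∈ S, L.edist v s ≤ h
  swap
  · refine (hK₀ x y (p.reachable_of_forall_mem_tail_not _ hK fun v hv hQ => ?_)).trans ?_
    · exact hnear ⟨v, List.mem_of_mem_tail hv, hQ⟩
    · exact_mod_cast Nat.le_add_right _ _
  obtain ⟨u, hu, ⟨s₀, hs₀, hus₀⟩, q, hq⟩ := p.exists_suffix_after_last _ hnear
  have hs₀T : s₀ ∈ T := hT u hu s₀ hs₀ hus₀
  have hjump : ∀ u', L.edist u' s₀ ≤ h → L.edist u' y ≤ (2 * h + b : ℕ) := fun u' hu's₀ =>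
    calc L.edist u' y ≤ L.edist u' s₀ + L.edist s₀ u + L.edist u y := L.edist_triangle4 _ _ _ _
      _ ≤ h + h + b := by
          gcongr
          · rwa [edist_comm]
          · exact hK₀ u y (q.reachable_of_forall_mem_tail_not _ hK hq)
      _ = (2 * h + b : ℕ) := by push_cast; ring
  have hcard := Finset.card_erase_add_one hs₀T
  rcases p.exists_prefix_before_first (L.edist · s₀ ≤ h) ⟨u, hu, hus₀⟩ with
    hxs₀ | ⟨v, u', t, hvu', hu's₀, ht⟩
  · refine (hjump x hxs₀).trans (Nat.cast_le.mpr ?_)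
    rw [← hcard, add_mul]
    omega
  have hT' : ∀ w ∈ t.support, ∀ s ∈ S, L.edist w s ≤ h → s ∈ T.erase s₀ := fun w hw s hs hws =>
    mem_erase.mpr ⟨fun hss => (ht w hw).2 (by rwa [hss] at hws), hT w (ht w hw).1 s hs hws⟩
  calc L.edist x y ≤ L.edist x v + L.edist v u' + L.edist u' y := L.edist_triangle4 _ _ _ _
    _ ≤ (b + #(T.erase s₀) * (b + 2 * h + 1) : ℕ) + 1 + (2 * h + b : ℕ) := by
        gcongr
        · exact ih _ (erase_ssubset hs₀T) t hT'
        · exact (edist_eq_one_iff_adj.mpr (hKL hvu')).le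
        · exact hjump u' hu's₀
    _ = (b + #T * (b + 2 * h + 1) : ℕ) := by
        rw [← hcard]
        push_cast
        ring

end SimpleGraph

section WeightedGraph

variable {V : Type} {G : SimpleGraph V} {w : Sym2 V → ℝ} {ℓ : ℝ}

@[simp] lemma walkLen_nil {x : V} : walkLen w (Walk.nil : G.Walk x x) = 0 := rfl

@[simp] lemma walkLen_cons {x y z : V} (h : G.Adj x y) (p : G.Walk y z) :
    walkLen w (Walk.cons h p) = w s(x, y) + walkLen w p := by
  simp [walkLen]

@[simp] lemma walkLen_append {x y z : V} (p : G.Walk x y) (q : G.Walk y z) :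
    walkLen w (p.append q) = walkLen w p + walkLen w q := by
  simp [walkLen, Walk.edges_append]

@[simp] lemma walkLen_concat {x y z : V} (p : G.Walk x y) (h : G.Adj y z) :
    walkLen w (p.concat h) = walkLen w p + w s(y, z) := by
  simp [walkLen, Walk.edges_concat, add_comm]

lemma walkLen_nonneg (hpos : ∀ e ∈ G.edgeSet, 0 < w e) {x y : V} (p : G.Walk x y) :
    0 ≤ walkLen w p :=
  List.sum_nonneg fun _ hx => by
    obtain ⟨e, he, rfl⟩ := List.mem_map.mp hx
    exact (hpos e (p.edges_subset_edgeSet he)).le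

lemma wDist_le_walkLen {x y : V} (p : G.Walk x y) (hp : p.IsPath) :
    wDist G w x y ≤ ENNReal.ofReal (walkLen w p) :=
  iInf_le (fun q : {q : G.Walk x y // q.IsPath} => ENNReal.ofReal (walkLen w q.1)) ⟨p, hp⟩

lemma wDist_le_of_adj {x y : V} (h : G.Adj x y) :
    wDist G w x y ≤ ENNReal.ofReal (w s(x, y)) := by
  simpa using wDist_le_walkLen (w := w) (Walk.cons h .nil) (Walk.IsPath.nil.cons (by simpa using h.ne))

lemma wDist_self (x : V) : wDist G w x x = 0 :=
  le_antisymm (by simpa using wDist_le_walkLen (w := w) (Walk.nil : G.Walk x x) .nil)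
    zero_le

lemma exists_isPath_walkLen_le_of_wDist_le [Finite V] {x y : V} {t : ℝ} (ht : 0 ≤ t)
    (h : wDist G w x y ≤ ENNReal.ofReal t) : ∃ p : G.Walk x y, p.IsPath ∧ walkLen w p ≤ t := by
  classical
  cases nonempty_fintype V
  have : Fintype {q : G.Walk x y // q.IsPath} := SimpleGraph.Path.instFintype (G := G)
  rcases isEmpty_or_nonempty {q : G.Walk x y // q.IsPath} with _ | _
  · rw [wDist, iInf_of_empty] at h
    exact absurd h (not_le.mpr ENNReal.ofReal_lt_top)
  obtain ⟨q, hq⟩ := Finite.exists_min fun q : {q : G.Walk x y // q.IsPath} =>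
    ENNReal.ofReal (walkLen w q.1)
  exact ⟨q.1, q.2, (ENNReal.ofReal_le_ofReal_iff ht).mp ((le_iInf hq).trans h)⟩

lemma edist_powerGraph_le_one {x y : V} (h : wDist G w x y ≤ ENNReal.ofReal ℓ) :
    (powerGraph G w ℓ).edist x y ≤ 1 := by
  rw [edist_le_one_iff_adj_or_eq]
  by_cases hxy : x = y
  · exact .inr hxy
  · exact .inl ⟨hxy, h⟩

/-- `pa` is the stretch of the path not yet covered by a hop; hopping greedily, two consecutive
hops always cover weight more than `ℓ`. -/
lemma edist_powerGraph_le_of_append_isPath (hℓ : 0 < ℓ) (hpos : ∀ e ∈ G.edgeSet, 0 < w e)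
    (hbd : ∀ e ∈ G.edgeSet, w e ≤ ℓ) {x y : V} (p : G.Walk x y) :
    ∀ {a : V} (pa : G.Walk a x), (pa.append p).IsPath → walkLen w pa ≤ ℓ →
      ∃ n : ℕ, (powerGraph G w ℓ).edist a y ≤ n ∧
        n * ℓ ≤ 2 * (walkLen w pa + walkLen w p) + ℓ := by
  induction p with
  | nil =>
    intro a pa hpa hlen
    refine ⟨1, edist_powerGraph_le_one ((wDist_le_walkLen pa (by simpa using hpa)).trans
      (ENNReal.ofReal_le_ofReal hlen)), ?_⟩
    have := walkLen_nonneg hpos pa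
    simp only [walkLen_nil, Nat.cast_one, one_mul]
    linarith
  | @cons x x' y hxx' p ih =>
    intro a pa hpa hlen
    have hw := hbd s(x, x') hxx'
    by_cases hnear : walkLen w pa + w s(x, x') ≤ ℓ
    · obtain ⟨n, hn, hnℓ⟩ := ih (pa.concat hxx') (by rwa [Walk.concat_append])
        (by rwa [walkLen_concat])
      exact ⟨n, hn, by simpa [add_assoc] using hnℓ⟩
    obtain ⟨n, hn, hnℓ⟩ := ih Walk.nil (by simpa using hpa.of_append_right.of_cons)
      (by simpa using hℓ.le)
    have hax : (powerGraph G w ℓ).edist a x ≤ 1 := edist_powerGraph_le_one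
      ((wDist_le_walkLen pa hpa.of_append_left).trans (ENNReal.ofReal_le_ofReal hlen))
    have hxx'₁ : (powerGraph G w ℓ).edist x x' ≤ 1 :=
      edist_powerGraph_le_one ((wDist_le_of_adj hxx').trans (ENNReal.ofReal_le_ofReal hw))
    refine ⟨n + 2, ?_, ?_⟩
    · calc (powerGraph G w ℓ).edist a y
          ≤ (powerGraph G w ℓ).edist a x + (powerGraph G w ℓ).edist x x' +
              (powerGraph G w ℓ).edist x' y := edist_triangle4 _ _ _ _
        _ ≤ 1 + 1 + n := by gcongr
        _ = (n + 2 : ℕ) := by push_cast; ring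
    · simp only [walkLen_nil, zero_add] at hnℓ
      simp only [walkLen_cons]
      push_cast
      linarith

lemma edist_powerGraph_le_of_isPath (hℓ : 0 < ℓ) (hpos : ∀ e ∈ G.edgeSet, 0 < w e)
    (hbd : ∀ e ∈ G.edgeSet, w e ≤ ℓ) {x y : V} {t : ℝ} (p : G.Walk x y) (hp : p.IsPath)
    (hpt : walkLen w p ≤ t) : (powerGraph G w ℓ).edist x y ≤ ⌊2 * t / ℓ + 1⌋₊ := by
  obtain ⟨n, hn, hnℓ⟩ := edist_powerGraph_le_of_append_isPath hℓ hpos hbd p Walk.nil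
    (by simpa using hp) (by simpa using hℓ.le)
  refine hn.trans (Nat.cast_le.mpr (Nat.le_floor ?_))
  rw [div_add_one hℓ.ne', le_div_iff₀ hℓ]
  simp only [walkLen_nil, zero_add] at hnℓ
  linarith

lemma powerGraph_adj_delVerts_or_exists_mem [Finite V] (hℓ : 0 ≤ ℓ)
    (hpos : ∀ e ∈ G.edgeSet, 0 < w e) (Z : Set V) {x y : V} (h : (powerGraph G w ℓ).Adj x y) :
    (powerGraph (delVerts G Z) w ℓ).Adj x y ∨
      ∃ z ∈ Z, wDist G w x z ≤ ENNReal.ofReal ℓ ∧ wDist G w y z ≤ ENNReal.ofReal ℓ := by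
  classical
  obtain ⟨p, hp, hpℓ⟩ := exists_isPath_walkLen_le_of_wDist_le hℓ h.2
  by_cases hZ : ∃ z ∈ p.support, z ∈ Z
  · obtain ⟨z, hzp, hzZ⟩ := hZ
    have hsplit := congrArg (walkLen w) (p.take_spec hzp)
    rw [walkLen_append] at hsplit
    have := walkLen_nonneg hpos (p.takeUntil z hzp)
    have := walkLen_nonneg hpos (p.dropUntil z hzp)
    refine .inr ⟨z, hzZ, (wDist_le_walkLen _ (hp.takeUntil hzp)).trans
      (ENNReal.ofReal_le_ofReal (by linarith)), ?_⟩
    rw [wDist_comm]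
    exact (wDist_le_walkLen _ (hp.dropUntil hzp)).trans (ENNReal.ofReal_le_ofReal (by linarith))
  push Not at hZ
  have hpZ : ∀ e ∈ p.edges, e ∈ (delVerts G Z).edgeSet := by
    rintro ⟨u, v⟩ he
    exact ⟨p.edges_subset_edgeSet he, hZ u (p.fst_mem_support_of_mem_edges he),
      hZ v (p.snd_mem_support_of_mem_edges he)⟩
  refine .inl ⟨h.1, (wDist_le_walkLen _ (hp.transfer hpZ)).trans ?_⟩
  simpa [walkLen, Walk.edges_transfer] using ENNReal.ofReal_le_ofReal hpℓ

end WeightedGraph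

section Patching

variable {V : Type}

lemma hopDist_eq_edist (L : SimpleGraph V) (x y : V) : hopDist L x y = L.edist x y := by
  refine le_antisymm ?_ (le_iInf fun q => by simpa using ENat.toENNReal_le.mpr (L.edist_le q))
  by_cases hxy : L.Reachable x y
  · obtain ⟨q, hq⟩ := hxy.exists_walk_length_eq_edist
    exact (iInf_le _ q).trans_eq (by rw [← hq]; rfl)
  · simp [edist_eq_top_of_not_reachable hxy]

lemma le_floor_of_toENNReal_le_ofReal {e : ℕ∞} {a : ℝ} (h : (e : ℝ≥0∞) ≤ ENNReal.ofReal a) :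
    e ≤ ⌊a⌋₊ := by
  lift e to ℕ using fun he => by simp [he] at h
  rcases eq_or_ne e 0 with rfl | he
  · simp
  rw [ENat.toENNReal_coe, ENNReal.natCast_le_ofReal he] at h
  exact_mod_cast Nat.le_floor h

lemma colorGraph_le {K : SimpleGraph V} {A : Set V} {m : ℕ} (c : V → Fin m) :
    colorGraph K A c ≤ K := fun _ _ h => h.1

lemma mem_of_colorGraph_reachable {K : SimpleGraph V} {A : Set V} {m : ℕ} {c : V → Fin m}
    {x y : V} (h : (colorGraph K A c).Reachable x y) (hxy : x ≠ y) : x ∈ A := by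
  obtain ⟨p⟩ := h
  cases p with
  | nil => exact absurd rfl hxy
  | cons hadj _ => exact hadj.2.1

lemma HasWeakDiamLE.edist_le_floor {K L : SimpleGraph V} {A : Set V} {m : ℕ} {c : V → Fin m}
    {N : ℝ} (hc : HasWeakDiamLE K A L c N) {x y : V} (hxy : (colorGraph K A c).Reachable x y) :
    L.edist x y ≤ ⌊N⌋₊ := by
  rcases eq_or_ne x y with rfl | hne
  · simp
  refine le_floor_of_toENNReal_le_ofReal ?_
  rw [← hopDist_eq_edist]
  exact hc x (mem_of_colorGraph_reachable hxy hne) y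
    (mem_of_colorGraph_reachable hxy.symm hne.symm) hxy

lemma hasWeakDiamLE_of_edist_le {K L : SimpleGraph V} {A : Set V} {m : ℕ} {c : V → Fin m}
    {B : ℕ} {N : ℝ} (hB : (B : ℝ) ≤ N)
    (h : ∀ x y, (colorGraph K A c).Reachable x y → L.edist x y ≤ B) :
    HasWeakDiamLE K A L c N := fun x _ y _ hxy => by
  rw [hopDist_eq_edist]
  calc (L.edist x y : ℝ≥0∞) ≤ ((B : ℕ∞) : ℝ≥0∞) := ENat.toENNReal_le.mpr (h x y hxy)
    _ = ENNReal.ofReal B := by simp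
    _ ≤ ENNReal.ofReal N := ENNReal.ofReal_le_ofReal hB

variable {G : SimpleGraph V} {w : Sym2 V → ℝ} {ℓ r : ℝ} {S Z : Set V}

lemma exists_edist_powerGraph_le_of_mem_nbhd (hℓ : 0 < ℓ) (hpos : ∀ e ∈ G.edgeSet, 0 < w e)
    (hbd : ∀ e ∈ G.edgeSet, w e ≤ ℓ) {x z : V} (hz : z ∈ nbhd G w r S)
    (hxz : wDist G w x z ≤ ENNReal.ofReal ℓ) :
    ∃ s ∈ S, (powerGraph G w ℓ).edist x s ≤ (⌊2 * r / ℓ + 1⌋₊ + 1 : ℕ) := by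
  obtain ⟨s, hs, p, hp, hpr⟩ := hz
  refine ⟨s, hs, ?_⟩
  calc (powerGraph G w ℓ).edist x s
      ≤ (powerGraph G w ℓ).edist x z + (powerGraph G w ℓ).edist z s :=
        SimpleGraph.edist_triangle
    _ ≤ 1 + ⌊2 * r / ℓ + 1⌋₊ :=
        add_le_add (edist_powerGraph_le_one hxz)
          (edist_powerGraph_le_of_isPath hℓ hpos hbd p hp hpr)
    _ = (⌊2 * r / ℓ + 1⌋₊ + 1 : ℕ) := by push_cast; ring

lemma colorGraph_adj_delVerts_or_near [Finite V] (hℓ : 0 < ℓ) (hpos : ∀ e ∈ G.edgeSet, 0 < w e)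
    (hbd : ∀ e ∈ G.edgeSet, w e ≤ ℓ) (hZ : Z ⊆ nbhd G w r S) {R : Set V} {m : ℕ}
    {c c' : V → Fin m} (hcc : ∀ v ∈ (Z ∪ R)ᶜ, c' v = c v) {u v : V}
    (huv : (colorGraph (powerGraph G w ℓ) Rᶜ c').Adj u v) :
    (colorGraph (powerGraph (delVerts G Z) w ℓ) (Z ∪ R)ᶜ c).Adj u v ∨
      (∃ s ∈ S, (powerGraph G w ℓ).edist u s ≤ (⌊2 * r / ℓ + 1⌋₊ + 1 : ℕ)) ∧
        ∃ s ∈ S, (powerGraph G w ℓ).edist v s ≤ (⌊2 * r / ℓ + 1⌋₊ + 1 : ℕ) := by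
  obtain ⟨hP, hu, hv, hc'⟩ := huv
  have near {x z : V} (hz : z ∈ Z) :=
    exists_edist_powerGraph_le_of_mem_nbhd (x := x) hℓ hpos hbd (hZ hz)
  have hself (z : V) : wDist G w z z ≤ ENNReal.ofReal ℓ := by rw [wDist_self]; exact zero_le
  have hvu : wDist G w v u ≤ ENNReal.ofReal ℓ := by rw [wDist_comm]; exact hP.2
  by_cases huZ : u ∈ Z
  · exact .inr ⟨near huZ (hself u), near huZ hvu⟩
  by_cases hvZ : v ∈ Z
  · exact .inr ⟨near hvZ hP.2, near hvZ (hself v)⟩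
  have huA : u ∈ (Z ∪ R)ᶜ := by simp_all
  have hvA : v ∈ (Z ∪ R)ᶜ := by simp_all
  rcases powerGraph_adj_delVerts_or_exists_mem hℓ.le hpos Z hP with hP' | ⟨z, hz, huz, hvz⟩
  · exact .inl ⟨hP', huA, hvA, by rw [← hcc u huA, ← hcc v hvA, hc']⟩
  · exact .inr ⟨near hz huz, near hz hvz⟩

end Patching

theorem patching_centered_set_gen_general (k : ℕ) (r : ℝ) (ℓ N : ℝ)
    (hℓ : 0 < ℓ) :
    ∃ Nstar : ℝ, (k + 1 : ℝ) * N ≤ Nstar ∧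
      ∀ W : WGraph, W.IsBounded ℓ →
        ∀ S : Set W.V, S.ncard ≤ k →
          ∀ Z : Set W.V, Z ⊆ nbhd W.G W.w r S →
            ∀ m : ℕ, 0 < m → ∀ R : Set W.V, ∀ c cZ : W.V → Fin m,
              HasWeakDiamLE (powerGraph (delVerts W.G Z) W.w ℓ) (Z ∪ R)ᶜ
                (powerGraph W.G W.w ℓ) c N →
              ∀ c' : W.V → Fin m,
                (∀ v ∈ Z \ R, c' v = cZ v) →
                (∀ v ∈ (Z ∪ R)ᶜ, c' v = c v) →
                HasWeakDiamLE (powerGraph W.G W.w ℓ) Rᶜ (powerGraph W.G W.w ℓ) c' Nstar := by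
  set h := ⌊2 * r / ℓ + 1⌋₊ + 1
  set b := ⌊N⌋₊
  refine ⟨max ((k + 1 : ℝ) * N) ↑(b + k * (b + 2 * h + 1)), le_max_left _ _, ?_⟩
  intro W hW S hS Z hZ m _ R c cZ hc c' _ hcc
  have := W.fin
  have hSfin := Set.toFinite S
  refine hasWeakDiamLE_of_edist_le (le_max_right _ _) fun x y ⟨p⟩ => ?_
  calc (powerGraph W.G W.w ℓ).edist x y ≤ (b + #hSfin.toFinset * (b + 2 * h + 1) : ℕ) :=
        edist_le_of_walk_of_adj_or_near (colorGraph_le c') (fun _ _ huv => hc.edist_le_floor huv)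
          (fun _ _ huv => colorGraph_adj_delVerts_or_near hℓ W.pos hW hZ hcc huv) _ p
          fun _ _ _ hs _ => hSfin.mem_toFinset.mpr hs
    _ ≤ (b + k * (b + 2 * h + 1) : ℕ) := by
        gcongr
        rwa [← Set.ncard_eq_toFinset_card]

/-- Theorem (Lemma `patching_centered_set_gen`): colourings of `(G,φ)^ℓ − R` obtained by
combining a colouring of `((G,φ)−Z)^ℓ − R` of weak diameter in `(G,φ)^ℓ` at most `N` with an
arbitrary colouring of `Z`, where `Z ⊆ N_{(G,φ)}^{≤r}[S]` with `|S| ≤ k`, have weak diameter in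
`(G,φ)^ℓ` at most `N*`. -/
theorem patching_centered_set_gen (k : ℕ) (r : ℝ) (hr : 0 ≤ r) (ℓ N : ℝ)
    (hℓ : 0 < ℓ) (hN : 0 < N) :
    ∃ Nstar : ℝ, (k + 1 : ℝ) * N ≤ Nstar ∧
      ∀ W : WGraph, W.IsBounded ℓ →
        ∀ S : Set W.V, S.ncard ≤ k →
          ∀ Z : Set W.V, Z ⊆ nbhd W.G W.w r S →
            ∀ m : ℕ, 0 < m → ∀ R : Set W.V, ∀ c cZ : W.V → Fin m,
              HasWeakDiamLE (powerGraph (delVerts W.G Z) W.w ℓ) (Z ∪ R)ᶜ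
                (powerGraph W.G W.w ℓ) c N →
              ∀ c' : W.V → Fin m,
                (∀ v ∈ Z \ R, c' v = cZ v) →
                (∀ v ∈ (Z ∪ R)ᶜ, c' v = c v) →
                HasWeakDiamLE (powerGraph W.G W.w ℓ) Rᶜ (powerGraph W.G W.w ℓ) c' Nstar :=
  patching_centered_set_gen_general k r ℓ N hℓ
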